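/- arXiv:1102.1616 — 2 statements merged into one kernel-verified Lean document; each statement's English description precedes it below -/
import Mathlib

section
/- Let m ≥ 1 and let x₀ = k/2^{2m} with k an integer, 0 ≤ k < 2^{2m}, such that D_{2m}(x₀) = 0. Then for every x ∈ [k/2^{2m}, (k+1)/2^{2m}] one has T(x) = T(x₀) + 2^{-2m}·T(2^{2m}(x - x₀)). In other words, the graph of T above [k/2^{2m}, (k+1)/2^{2m}] is a similar copy of the whole graph of T over [0,1], scaled by 2^{-2m} and shifted up by T(x₀). -/
/-!
Splitting off the first `N` terms gives `T x = S_N x + 2⁻ᴺ T (2ᴺ x)`. On a dyadic interval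
`[k/2ᴺ, (k+1)/2ᴺ]` each `phi (2ⁿ x)` with `n < N` is affine of slope `±2ⁿ`, the sign being
`(-1)^{ε_{n+1}}`, so `S_N` is affine there with slope `D N (k/2ᴺ)`; when this vanishes `S_N` is
constant. The remainder is handled by the `1`-periodicity of `T` and `T k = 0`.
-/

open Set MeasureTheory ENNReal

/-- `phi x` is the distance from `x` to the nearest integer. -/
noncomputable def phi (x : ℝ) : ℝ := |x - (round x : ℤ)|

/-- The Takagi function. -/
noncomputable def T (x : ℝ) : ℝ := ∑' n : ℕ, phi (2 ^ n * x) / 2 ^ n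

/-- The `n`-th binary digit of `x` (terminating expansion for dyadic rationals). -/
noncomputable def eps (n : ℕ) (x : ℝ) : ℤ := ⌊2 ^ n * x⌋ - 2 * ⌊2 ^ (n - 1) * x⌋

/-- `D k x = ∑_{j=1}^k (-1)^{ε_j(x)}`, the excess of 0 digits over 1 digits. -/
noncomputable def D (k : ℕ) (x : ℝ) : ℤ := ∑ j ∈ Finset.Icc 1 k, (1 - 2 * eps j x)

/-- The level set of the Takagi function at level `y`. -/
def L (y : ℝ) : Set ℝ := {x | x ∈ Set.Icc (0:ℝ) 1 ∧ T x = y}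

/-- `x` is a balanced dyadic rational of order `m`. -/
def BalancedOfOrder (x : ℝ) (m : ℕ) : Prop :=
  x ∈ Set.Ico (0:ℝ) 1 ∧ (∃ k : ℤ, x = (k : ℝ) / 2 ^ (2 * m)) ∧ D (2 * m) x = 0

/-- The generation of a balanced dyadic rational of order `m`:
the number of indices `1 ≤ j ≤ 2m` with `D j x = 0`. -/
noncomputable def generation (x : ℝ) (m : ℕ) : ℕ :=
  ((Finset.Icc 1 (2 * m)).filter (fun j => D j x = 0)).card

/-- A balanced dyadic rational of order `m` is leading if `D j x ≥ 0` for all `1 ≤ j ≤ 2m`. -/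
def Leading (x : ℝ) (m : ℕ) : Prop := ∀ j ∈ Finset.Icc 1 (2 * m), 0 ≤ D j x

/-- The equivalence relation whose classes are the local level sets. -/
def locSetoid : Setoid ℝ where
  r x x' := ∀ n : ℕ, 1 ≤ n → |D n x| = |D n x'|
  iseqv := ⟨fun _ _ _ => rfl, fun h n hn => (h n hn).symm,
    fun h g n hn => (h n hn).trans (g n hn)⟩

/-- The set of local level sets contained in `L y`: the image of `L y ∩ [0,1)`
under the quotient map of `locSetoid`. -/
def locClasses (y : ℝ) : Set (Quotient locSetoid) :=
  Quotient.mk locSetoid '' (L y ∩ Set.Ico (0:ℝ) 1)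

lemma phi_nonneg (x : ℝ) : 0 ≤ phi x := abs_nonneg _

lemma phi_add_intCast (x : ℝ) (M : ℤ) : phi (x + M) = phi x := by
  simp [phi, round_add_intCast]

lemma phi_eq_abs_sub_intCast {y : ℝ} {M : ℤ} (h : |y - M| ≤ 1 / 2) : phi y = |y - M| := by
  refine le_antisymm (round_le y M) ?_
  by_cases hM : round y = M
  · simp [phi, hM]
  · have h1 : (1 : ℝ) ≤ |(round y : ℝ) - M| := by
      rw [← Int.cast_sub, ← Int.cast_abs]
      exact_mod_cast Int.one_le_abs (sub_ne_zero.mpr hM)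
    have h2 := abs_sub_le (round y : ℝ) y M
    rw [abs_sub_comm (round y : ℝ) y] at h2
    unfold phi
    linarith

-- `a ≤ y` both lie in the half-integer interval `[⌊2a⌋/2, (⌊2a⌋+1)/2]`, where `phi` is affine.
lemma phi_sub_phi_eq_of_le (a y : ℝ) (hay : a ≤ y) (hy : 2 * y ≤ ⌊2 * a⌋ + 1) :
    phi y - phi a = (1 - 2 * ((⌊2 * a⌋ - 2 * ⌊a⌋ : ℤ) : ℝ)) * (y - a) := by
  set M := ⌊a⌋
  have hM : (M : ℝ) ≤ a := Int.floor_le a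
  have hM' : a < M + 1 := Int.lt_floor_add_one a
  have hlo : 2 * M ≤ ⌊2 * a⌋ := Int.le_floor.mpr (by push_cast; linarith)
  have hhi : ⌊2 * a⌋ < 2 * M + 2 := Int.floor_lt.mpr (by push_cast; linarith)
  have h2a : (⌊2 * a⌋ : ℝ) ≤ 2 * a := Int.floor_le _
  have h2a' : 2 * a < ⌊2 * a⌋ + 1 := Int.lt_floor_add_one _
  rcases (by omega : ⌊2 * a⌋ = 2 * M ∨ ⌊2 * a⌋ = 2 * M + 1) with hd | hd
  · have hd' : (⌊2 * a⌋ : ℝ) = 2 * M := by exact_mod_cast hd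
    rw [hd, phi_eq_abs_sub_intCast (M := M) (by rw [abs_le]; constructor <;> linarith),
      phi_eq_abs_sub_intCast (M := M) (by rw [abs_le]; constructor <;> linarith),
      abs_of_nonneg (by linarith), abs_of_nonneg (by linarith)]
    push_cast
    ring
  · have hd' : (⌊2 * a⌋ : ℝ) = 2 * M + 1 := by exact_mod_cast hd
    rw [hd,
      phi_eq_abs_sub_intCast (M := M + 1) (by push_cast; rw [abs_le]; constructor <;> linarith),
      phi_eq_abs_sub_intCast (M := M + 1) (by push_cast; rw [abs_le]; constructor <;> linarith)]
    push_cast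
    rw [abs_of_nonpos (by linarith), abs_of_nonpos (by linarith)]
    ring

lemma summable_phi_two_pow_mul_div (x : ℝ) :
    Summable fun n : ℕ => phi (2 ^ n * x) / 2 ^ n := by
  refine summable_geometric_two.of_nonneg_of_le
    (fun n => div_nonneg (phi_nonneg _) (by positivity)) fun n => ?_
  rw [one_div_pow]
  have : phi (2 ^ n * x) ≤ 1 := (abs_sub_round _).trans (by norm_num)
  gcongr

lemma T_eq_sum_range_add (x : ℝ) (N : ℕ) :
    T x = ∑ n ∈ Finset.range N, phi (2 ^ n * x) / 2 ^ n + T (2 ^ N * x) / 2 ^ N := by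
  rw [T, ← (summable_phi_two_pow_mul_div x).sum_add_tsum_nat_add N, T, ← tsum_div_const]
  congr 2 with n
  rw [pow_add, mul_assoc, div_div]

lemma T_add_intCast (x : ℝ) (M : ℤ) : T (x + M) = T x := by
  unfold T
  congr 1 with n
  rw [mul_add, show (2 : ℝ) ^ n * M = ((2 ^ n * M : ℤ) : ℝ) by push_cast; ring, phi_add_intCast]

lemma T_intCast (M : ℤ) : T M = 0 := by
  rw [← zero_add (M : ℝ), T_add_intCast, T]
  simp [phi]

lemma eps_succ (n : ℕ) (x : ℝ) : eps (n + 1) x = ⌊2 * (2 ^ n * x)⌋ - 2 * ⌊2 ^ n * x⌋ := by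
  rw [eps, Nat.add_sub_cancel, pow_succ, mul_comm _ (2 : ℝ), mul_assoc]

lemma D_eq_sum_range (N : ℕ) (x : ℝ) :
    D N x = ∑ n ∈ Finset.range N, (1 - 2 * eps (n + 1) x) := by
  rw [D, ← Finset.Ico_add_one_right_eq_Icc, Finset.sum_Ico_eq_sum_range, Nat.add_sub_cancel]
  simp only [add_comm 1]

lemma intCast_add_one_div_two_pow_le (k : ℤ) (r : ℕ) :
    ((k : ℝ) + 1) / 2 ^ r ≤ ⌊(k : ℝ) / 2 ^ r⌋ + 1 := by
  have hpos : (0 : ℝ) < 2 ^ r := by positivity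
  have hlt : (k : ℝ) < 2 ^ r * (⌊(k : ℝ) / 2 ^ r⌋ + 1) := by
    have := Int.lt_floor_add_one ((k : ℝ) / 2 ^ r)
    rwa [div_lt_iff₀ hpos, mul_comm] at this
  have hle : k + 1 ≤ 2 ^ r * (⌊(k : ℝ) / 2 ^ r⌋ + 1) := by exact_mod_cast hlt
  rw [div_le_iff₀ hpos, mul_comm]
  exact_mod_cast hle

lemma phi_two_pow_mul_sub {N n : ℕ} (hn : n < N) (k : ℤ) {x : ℝ}
    (hx : x ∈ Icc ((k : ℝ) / 2 ^ N) (((k : ℝ) + 1) / 2 ^ N)) :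
    phi (2 ^ n * x) - phi (2 ^ n * ((k : ℝ) / 2 ^ N)) =
      (1 - 2 * (eps (n + 1) ((k : ℝ) / 2 ^ N) : ℝ)) * 2 ^ n * (x - (k : ℝ) / 2 ^ N) := by
  obtain ⟨r, rfl⟩ : ∃ r, N = n + 1 + r := ⟨N - (n + 1), by omega⟩
  have hscale : ∀ z : ℝ, 2 * (2 ^ n * (z / 2 ^ (n + 1 + r))) = z / 2 ^ r := fun z => by
    rw [pow_add, pow_succ]; field_simp
  rw [eps_succ, phi_sub_phi_eq_of_le _ _ (by gcongr; exact hx.1) ?_]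
  · ring
  rw [hscale]
  calc 2 * (2 ^ n * x) ≤ 2 * (2 ^ n * (((k : ℝ) + 1) / 2 ^ (n + 1 + r))) := by
        gcongr; exact hx.2
    _ = ((k : ℝ) + 1) / 2 ^ r := hscale _
    _ ≤ _ := intCast_add_one_div_two_pow_le k r

lemma sum_range_phi_two_pow_mul_div_eq (N : ℕ) (k : ℤ) {x : ℝ}
    (hx : x ∈ Icc ((k : ℝ) / 2 ^ N) (((k : ℝ) + 1) / 2 ^ N)) :
    ∑ n ∈ Finset.range N, phi (2 ^ n * x) / 2 ^ n =
      ∑ n ∈ Finset.range N, phi (2 ^ n * ((k : ℝ) / 2 ^ N)) / 2 ^ n +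
        D N ((k : ℝ) / 2 ^ N) * (x - (k : ℝ) / 2 ^ N) := by
  rw [← sub_eq_iff_eq_add', ← Finset.sum_sub_distrib, D_eq_sum_range, Int.cast_sum,
    Finset.sum_mul]
  refine Finset.sum_congr rfl fun n hn => ?_
  rw [← sub_div, phi_two_pow_mul_sub (Finset.mem_range.mp hn) k hx]
  push_cast
  field_simp

theorem stmt1_general (m : ℕ) (k : ℤ)
    (hbal : D (2 * m) ((k : ℝ) / 2 ^ (2 * m)) = 0) :
    ∀ x ∈ Set.Icc ((k : ℝ) / 2 ^ (2 * m)) (((k : ℝ) + 1) / 2 ^ (2 * m)),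
      T x = T ((k : ℝ) / 2 ^ (2 * m)) +
        (1 / 2 ^ (2 * m)) * T (2 ^ (2 * m) * (x - (k : ℝ) / 2 ^ (2 * m))) := by
  intro x hx
  have hk : (2 : ℝ) ^ (2 * m) * ((k : ℝ) / 2 ^ (2 * m)) = k := by field_simp
  have hshift : (2 : ℝ) ^ (2 * m) * x = 2 ^ (2 * m) * (x - (k : ℝ) / 2 ^ (2 * m)) + k := by
    rw [mul_sub, hk, sub_add_cancel]
  rw [T_eq_sum_range_add x (2 * m), T_eq_sum_range_add ((k : ℝ) / 2 ^ (2 * m)) (2 * m),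
    sum_range_phi_two_pow_mul_div_eq _ k hx, hbal, hk, T_intCast, hshift, T_add_intCast]
  ring

theorem stmt1 (m : ℕ) (hm : 1 ≤ m) (k : ℤ) (hk0 : 0 ≤ k) (hk1 : k < 2 ^ (2 * m))
    (hbal : D (2 * m) ((k : ℝ) / 2 ^ (2 * m)) = 0) :
    ∀ x ∈ Set.Icc ((k : ℝ) / 2 ^ (2 * m)) (((k : ℝ) + 1) / 2 ^ (2 * m)),
      T x = T ((k : ℝ) / 2 ^ (2 * m)) +
        (1 / 2 ^ (2 * m)) * T (2 ^ (2 * m) * (x - (k : ℝ) / 2 ^ (2 * m))) :=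
  stmt1_general m k hbal
end

section
/- Let r : ℕ → ℝ be a sequence with r_n ∈ {-1, 1} for all n, and define f(x) = ∑_{n=0}^∞ (r_n/2^n)·φ(2^n x). For x ∈ [0,1) set D_k^r(x) = ∑_{j=1}^k r_{j-1}·(-1)^{ε_j(x)}. Then for every x ∈ [0,1), f(x) = C(r) - (1/4)·∑_{n=1}^∞ (-1)^{ε_{n+1}(x)}·D_n^r(x)/2^n, where C(r) = ∑_{n=0}^∞ r_n/2^{n+2} (all series converge absolutely). -/
open Set MeasureTheory ENNReal

/-- `D` for the signed Takagi function with sign sequence `r`. -/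
noncomputable def Dr (r : ℕ → ℝ) (k : ℕ) (x : ℝ) : ℝ :=
  ∑ j ∈ Finset.Icc 1 k, r (j - 1) * (1 - 2 * (eps j x : ℝ))

/-!
Write `s_j = (-1)^{ε_j(x)}` and `u_n = 1 - 2 frac(2^n x)`; the binary expansion of `frac(2^n x)`
reads `u_n = ∑_{m ≥ 0} s_{n+m+1} / 2^{m+1}`. Comparing `frac(2^n x)` with `1/2` gives
`φ(2^n x) = 1/4 - s_{n+1} u_{n+1} / 4`, hence
`r_n φ(2^n x) / 2^n = r_n / 2^{n+2} - ∑_m r_n s_{n+1} s_{n+m+2} / 2^{n+m+3}`.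
This double series converges absolutely, and summing it along the antidiagonals `n + m = k`
instead collects `s_{k+2} D^r_{k+1}(x) / 2^{k+3}`.
-/

open Finset Filter Topology

theorem Summable.hasSum_sum_antidiagonal {α : Type*} [AddCommMonoid α] [TopologicalSpace α]
    [ContinuousAdd α] [T3Space α] {f : ℕ × ℕ → α} (hf : Summable f) :
    HasSum (fun k => ∑ p ∈ antidiagonal k, f p) (∑' p, f p) :=
  (HasAntidiagonal.sigmaAntidiagonalEquivProd.hasSum_iff.mpr hf.hasSum).sigma
    fun k => sum_coe_sort (antidiagonal k) f ▸ hasSum_fintype _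

lemma two_pow_succ_mul_eq_fract_add_floor (n : ℕ) (x : ℝ) :
    2 ^ (n + 1) * x = 2 * Int.fract (2 ^ n * x) + ((2 * ⌊2 ^ n * x⌋ : ℤ) : ℝ) := by
  rw [Int.fract, pow_succ']
  push_cast
  ring

lemma eps_succ_eq_floor (n : ℕ) (x : ℝ) : eps (n + 1) x = ⌊2 * Int.fract (2 ^ n * x)⌋ := by
  rw [eps, Nat.add_sub_cancel, two_pow_succ_mul_eq_fract_add_floor, Int.floor_add_intCast,
    add_sub_cancel_right]

lemma fract_two_pow_succ_mul (n : ℕ) (x : ℝ) :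
    Int.fract (2 ^ (n + 1) * x) = 2 * Int.fract (2 ^ n * x) - eps (n + 1) x := by
  rw [two_pow_succ_mul_eq_fract_add_floor, Int.fract_add_intCast, Int.fract, eps_succ_eq_floor]

lemma eps_succ_eq_zero_or_one (n : ℕ) (x : ℝ) : eps (n + 1) x = 0 ∨ eps (n + 1) x = 1 := by
  have h0 : 0 ≤ eps (n + 1) x :=
    eps_succ_eq_floor n x ▸ Int.floor_nonneg.2 (by linarith [Int.fract_nonneg (2 ^ n * x)])
  have h2 : eps (n + 1) x < 2 :=
    eps_succ_eq_floor n x ▸ Int.floor_lt.2 (by push_cast; linarith [Int.fract_lt_one (2 ^ n * x)])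
  omega

noncomputable def digitSign (j : ℕ) (x : ℝ) : ℝ := 1 - 2 * (eps j x : ℝ)

lemma abs_digitSign_succ (n : ℕ) (x : ℝ) : |digitSign (n + 1) x| = 1 := by
  rcases eps_succ_eq_zero_or_one n x with h | h <;> norm_num [digitSign, h]

lemma phi_two_pow_mul (n : ℕ) (x : ℝ) :
    phi (2 ^ n * x) =
      1 / 4 - digitSign (n + 1) x * (1 - 2 * Int.fract (2 ^ (n + 1) * x)) / 4 := by
  set t := Int.fract (2 ^ n * x) with ht
  have ht0 : 0 ≤ t := Int.fract_nonneg _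
  have ht1 : t < 1 := Int.fract_lt_one _
  rw [phi, abs_sub_round_eq_min, fract_two_pow_succ_mul, digitSign, eps_succ_eq_floor, ← ht]
  rcases lt_or_ge (2 * t) 1 with h | h
  · rw [Int.floor_eq_zero_iff.2 ⟨by linarith, h⟩, min_eq_left (by linarith)]
    ring
  · have h1 : ⌊2 * t⌋ = 1 := Int.floor_eq_iff.2 (by norm_num; constructor <;> linarith)
    rw [h1, min_eq_right (by linarith)]
    ring

lemma hasSum_digitSign_div_two_pow (n : ℕ) (x : ℝ) :
    HasSum (fun m => digitSign (n + m + 1) x / 2 ^ (m + 1)) (1 - 2 * Int.fract (2 ^ n * x)) := by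
  set u : ℕ → ℝ := fun k => 1 - 2 * Int.fract (2 ^ k * x)
  have hu : ∀ k, u k = digitSign (k + 1) x / 2 + u (k + 1) / 2 := fun k => by
    simp only [u, fract_two_pow_succ_mul, digitSign]
    ring
  have hu_le : ∀ k, ‖u k‖ ≤ 1 := fun k => abs_le.2
    ⟨by linarith [Int.fract_lt_one (2 ^ k * x)], by linarith [Int.fract_nonneg (2 ^ k * x)]⟩
  have hpartial : ∀ M, ∑ m ∈ range M, digitSign (n + m + 1) x / 2 ^ (m + 1)
      = u n - u (n + M) / 2 ^ M := fun M => by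
    induction M with
    | zero => simp
    | succ M ih =>
      rw [sum_range_succ, ih, hu (n + M), ← add_assoc]
      field_simp
      ring
  have hsummable : Summable fun m => digitSign (n + m + 1) x / 2 ^ (m + 1) := by
    refine Summable.of_norm_bounded (summable_geometric_two.mul_left (1 / 2)) fun m => ?_
    rw [norm_div, Real.norm_eq_abs, abs_digitSign_succ, norm_pow, Real.norm_two, one_div_pow,
      pow_succ]
    exact le_of_eq (by ring)
  have hrem : Tendsto (fun M => u (n + M) / 2 ^ M) atTop (𝓝 0) := by
    refine squeeze_zero_norm (fun M => ?_)
      (tendsto_pow_atTop_nhds_zero_of_lt_one (by norm_num : (0 : ℝ) ≤ 1 / 2) (by norm_num))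
    rw [norm_div, norm_pow, Real.norm_two, one_div_pow]
    gcongr
    exact hu_le _
  rw [hsummable.hasSum_iff_tendsto_nat]
  simp_rw [hpartial]
  simpa using tendsto_const_nhds.sub hrem

lemma Dr_succ_eq_sum_range (r : ℕ → ℝ) (k : ℕ) (x : ℝ) :
    Dr r (k + 1) x = ∑ n ∈ range (k + 1), r n * digitSign (n + 1) x := by
  rw [Dr, ← Finset.Ico_add_one_right_eq_Icc, sum_Ico_eq_sum_range]
  refine sum_congr (by simp) fun n _ => ?_
  rw [add_comm 1 n, Nat.add_sub_cancel, digitSign]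

lemma summable_div_two_pow_add {r : ℕ → ℝ} {M : ℝ} (hr : ∀ n, |r n| ≤ M) (k : ℕ) :
    Summable fun n => r n / 2 ^ (n + k) := by
  refine Summable.of_norm_bounded (summable_geometric_two.mul_left M) fun n => ?_
  rw [norm_div, Real.norm_eq_abs, norm_pow, Real.norm_two, one_div_pow, ← div_eq_mul_one_div]
  calc |r n| / 2 ^ (n + k) ≤ |r n| / 2 ^ n := by gcongr <;> simp
    _ ≤ M / 2 ^ n := by gcongr; exact hr n

noncomputable def digitPairTerm (r : ℕ → ℝ) (x : ℝ) (p : ℕ × ℕ) : ℝ :=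
  r p.1 * digitSign (p.1 + 1) x * digitSign (p.1 + p.2 + 2) x / 2 ^ (p.1 + p.2 + 3)

section digitPairTerm

variable (r : ℕ → ℝ) (x : ℝ)

lemma summable_digitPairTerm {M : ℝ} (hr : ∀ n, |r n| ≤ M) :
    Summable (digitPairTerm r x) := by
  have hM : 0 ≤ M := (abs_nonneg _).trans (hr 0)
  refine Summable.of_norm_bounded
    ((summable_geometric_two.mul_of_nonneg summable_geometric_two (fun _ => by positivity)
      (fun _ => by positivity)).mul_left M) fun p => ?_
  rw [digitPairTerm, norm_div, norm_mul, norm_mul, Real.norm_eq_abs, Real.norm_eq_abs,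
    Real.norm_eq_abs, abs_digitSign_succ, abs_digitSign_succ (p.1 + p.2 + 1), norm_pow,
    Real.norm_two, mul_one, mul_one]
  calc |r p.1| / 2 ^ (p.1 + p.2 + 3) ≤ M / 2 ^ (p.1 + p.2) :=
        div_le_div₀ hM (hr _) (by positivity) (pow_le_pow_right₀ one_le_two le_self_add)
    _ = M * ((1 / 2) ^ p.1 * (1 / 2) ^ p.2) := by rw [pow_add, one_div_pow, one_div_pow]; ring

lemma hasSum_digitPairTerm_fiber (n : ℕ) :
    HasSum (fun m => digitPairTerm r x (n, m))
      (r n / 2 ^ (n + 2) - r n / 2 ^ n * phi (2 ^ n * x)) := by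
  set c := r n * digitSign (n + 1) x / 2 ^ (n + 2)
  have hterm : (fun m => digitPairTerm r x (n, m))
      = fun m => c * (digitSign (n + 1 + m + 1) x / 2 ^ (m + 1)) := funext fun m => by
    rw [digitPairTerm, show n + 1 + m + 1 = n + m + 2 by ring]
    ring
  have hsum : r n / 2 ^ (n + 2) - r n / 2 ^ n * phi (2 ^ n * x)
      = c * (1 - 2 * Int.fract (2 ^ (n + 1) * x)) := by
    rw [phi_two_pow_mul]
    ring
  rw [hterm, hsum]
  exact (hasSum_digitSign_div_two_pow (n + 1) x).mul_left c

lemma sum_antidiagonal_digitPairTerm (k : ℕ) :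
    ∑ p ∈ antidiagonal k, digitPairTerm r x p =
      digitSign (k + 2) x * Dr r (k + 1) x / 2 ^ (k + 3) := by
  rw [Nat.sum_antidiagonal_eq_sum_range_succ_mk, Dr_succ_eq_sum_range, mul_sum, sum_div]
  refine sum_congr rfl fun n hn => ?_
  have hk : n + (k - n) = k := by have := mem_range.1 hn; omega
  simp only [digitPairTerm, hk]
  ring

end digitPairTerm

theorem stmt18_general (r : ℕ → ℝ) (hr : ∀ n, r n = -1 ∨ r n = 1)
    (f : ℝ → ℝ) (hf : ∀ x, f x = ∑' n : ℕ, r n / 2 ^ n * phi (2 ^ n * x))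
    (x : ℝ) :
    Summable (fun n : ℕ => r n / 2 ^ n * phi (2 ^ n * x)) ∧
    Summable (fun n : ℕ => r n / 2 ^ (n + 2)) ∧
    Summable (fun n : ℕ => (1 - 2 * (eps (n + 2) x : ℝ)) * Dr r (n + 1) x / 2 ^ (n + 1)) ∧
    f x = (∑' n : ℕ, r n / 2 ^ (n + 2)) -
      (1/4) * ∑' n : ℕ, (1 - 2 * (eps (n + 2) x : ℝ)) * Dr r (n + 1) x / 2 ^ (n + 1) := by
  have hr1 : ∀ n, |r n| ≤ 1 := fun n => by rcases hr n with h | h <;> simp [h]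
  have hC := (summable_div_two_pow_add hr1 2).hasSum
  have hpairs := summable_digitPairTerm r x hr1
  have hrows := hpairs.hasSum.prod_fiberwise (hasSum_digitPairTerm_fiber r x)
  have hdiag := hpairs.hasSum_sum_antidiagonal
  simp_rw [sum_antidiagonal_digitPairTerm] at hdiag
  have hterms : HasSum (fun n => r n / 2 ^ n * phi (2 ^ n * x))
      ((∑' n, r n / 2 ^ (n + 2)) - ∑' p, digitPairTerm r x p) := by
    simpa using hC.sub hrows
  have hD : HasSum (fun n => (1 - 2 * (eps (n + 2) x : ℝ)) * Dr r (n + 1) x / 2 ^ (n + 1))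
      (4 * ∑' p, digitPairTerm r x p) := by
    have hterm : ∀ n, (1 - 2 * (eps (n + 2) x : ℝ)) * Dr r (n + 1) x / 2 ^ (n + 1)
        = 4 * (digitSign (n + 2) x * Dr r (n + 1) x / 2 ^ (n + 3)) := fun n => by
      rw [digitSign]
      ring
    simpa only [hterm] using hdiag.mul_left 4
  refine ⟨hterms.summable, hC.summable, hD.summable, ?_⟩
  rw [hf, hterms.tsum_eq, hD.tsum_eq]
  ring

theorem stmt18 (r : ℕ → ℝ) (hr : ∀ n, r n = -1 ∨ r n = 1)
    (f : ℝ → ℝ) (hf : ∀ x, f x = ∑' n : ℕ, r n / 2 ^ n * phi (2 ^ n * x))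
    (x : ℝ) (hx : x ∈ Set.Ico (0:ℝ) 1) :
    Summable (fun n : ℕ => r n / 2 ^ n * phi (2 ^ n * x)) ∧
    Summable (fun n : ℕ => r n / 2 ^ (n + 2)) ∧
    Summable (fun n : ℕ => (1 - 2 * (eps (n + 2) x : ℝ)) * Dr r (n + 1) x / 2 ^ (n + 1)) ∧
    f x = (∑' n : ℕ, r n / 2 ^ (n + 2)) -
      (1/4) * ∑' n : ℕ, (1 - 2 * (eps (n + 2) x : ℝ)) * Dr r (n + 1) x / 2 ^ (n + 1) :=
  stmt18_general r hr f hf x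
end
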